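/- arXiv:2511.19781 — 2 statements merged into one kernel-verified Lean document; each statement's English description precedes it below -/
import Mathlib

section
/- Let g, ĝ : E → ℝ be bounded functions on a compact convex set E with g ≤ ĝ pointwise, and fix S₀ ∈ E. Then (conc ĝ)(S₀) = (conc g)(S₀) if and only if for every ε > 0 there exists a continuous affine ℓ_ε on E with ℓ_ε ≥ g on E, ℓ_ε(S₀) ≤ (conc g)(S₀) + ε, and ĝ(s) ≤ ℓ_ε(s) for all s ∈ E. -/
open Set

noncomputable def concEnv {V : Type*} [AddCommGroup V] [Module ℝ V] [TopologicalSpace V]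
    (E : Set V) (f : V → ℝ) (s : V) : ℝ :=
  sInf {y : ℝ | ∃ ℓ : V →ᴬ[ℝ] ℝ, (∀ x ∈ E, f x ≤ ℓ x) ∧ y = ℓ s}

section ConcaveEnvelope

variable {V : Type*} [AddCommGroup V] [Module ℝ V] [TopologicalSpace V] {E : Set V} {f : V → ℝ}

-- Without an upper bound on `f` there may be no majorant, and then `concEnv` is `sInf ∅ = 0`.
lemma concEnv_set_nonempty (hf : BddAbove (f '' E)) (s : V) :
    {y : ℝ | ∃ ℓ : V →ᴬ[ℝ] ℝ, (∀ x ∈ E, f x ≤ ℓ x) ∧ y = ℓ s}.Nonempty := by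
  obtain ⟨M, hM⟩ := hf
  exact ⟨M, ContinuousAffineMap.const ℝ V M, fun x hx => hM (mem_image_of_mem f hx), rfl⟩

lemma concEnv_set_bddBelow {s : V} (hs : s ∈ E) :
    BddBelow {y : ℝ | ∃ ℓ : V →ᴬ[ℝ] ℝ, (∀ x ∈ E, f x ≤ ℓ x) ∧ y = ℓ s} := by
  refine ⟨f s, ?_⟩
  rintro _ ⟨ℓ, hℓ, rfl⟩
  exact hℓ s hs

lemma concEnv_le_of_le {s : V} (hs : s ∈ E) {ℓ : V →ᴬ[ℝ] ℝ} (hℓ : ∀ x ∈ E, f x ≤ ℓ x) :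
    concEnv E f s ≤ ℓ s :=
  csInf_le (concEnv_set_bddBelow hs) ⟨ℓ, hℓ, rfl⟩

lemma exists_le_lt_concEnv_add (hf : BddAbove (f '' E)) (s : V) {ε : ℝ} (hε : 0 < ε) :
    ∃ ℓ : V →ᴬ[ℝ] ℝ, (∀ x ∈ E, f x ≤ ℓ x) ∧ ℓ s < concEnv E f s + ε := by
  obtain ⟨_, ⟨ℓ, hℓ, rfl⟩, hlt⟩ :=
    exists_lt_of_csInf_lt (concEnv_set_nonempty hf s) (lt_add_of_pos_right _ hε)
  exact ⟨ℓ, hℓ, hlt⟩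

lemma concEnv_mono {g : V → ℝ} (hf : BddAbove (f '' E)) (hgf : ∀ x ∈ E, g x ≤ f x)
    {s : V} (hs : s ∈ E) : concEnv E g s ≤ concEnv E f s :=
  le_of_forall_pos_le_add fun _ hε =>
    let ⟨_, hℓ, hlt⟩ := exists_le_lt_concEnv_add hf s hε
    (concEnv_le_of_le hs fun x hx => (hgf x hx).trans (hℓ x hx)).trans hlt.le

end ConcaveEnvelope

theorem stmt2_general {V : Type*} [AddCommGroup V] [Module ℝ V] [TopologicalSpace V]
    (E : Set V)
    (g ghat : V → ℝ)
    (hghat : ∃ M : ℝ, ∀ x ∈ E, |ghat x| ≤ M)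
    (hle : ∀ x ∈ E, g x ≤ ghat x) (S₀ : V) (hS₀ : S₀ ∈ E) :
    concEnv E ghat S₀ = concEnv E g S₀ ↔
      (∀ ε : ℝ, 0 < ε → ∃ ℓ : V →ᴬ[ℝ] ℝ,
        (∀ x ∈ E, g x ≤ ℓ x) ∧ ℓ S₀ ≤ concEnv E g S₀ + ε ∧
        ∀ s ∈ E, ghat s ≤ ℓ s) := by
  have hbdd : BddAbove (ghat '' E) := by
    obtain ⟨M, hM⟩ := hghat
    exact ⟨M, forall_mem_image.2 fun x hx => (le_abs_self _).trans (hM x hx)⟩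
  constructor
  · intro heq ε hε
    obtain ⟨ℓ, hℓ, hlt⟩ := exists_le_lt_concEnv_add hbdd S₀ hε
    exact ⟨ℓ, fun x hx => (hle x hx).trans (hℓ x hx), heq ▸ hlt.le, hℓ⟩
  · intro h
    refine le_antisymm (le_of_forall_pos_le_add fun ε hε => ?_) (concEnv_mono hbdd hle hS₀)
    obtain ⟨ℓ, -, hℓS₀, hℓ⟩ := h ε hε
    exact (concEnv_le_of_le hS₀ hℓ).trans hℓS₀

theorem stmt2 {V : Type*} [AddCommGroup V] [Module ℝ V] [TopologicalSpace V]
    [IsTopologicalAddGroup V] [ContinuousSMul ℝ V] [LocallyConvexSpace ℝ V]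
    (E : Set V) (hEc : IsCompact E) (hEconv : Convex ℝ E) (hEne : E.Nonempty)
    (g ghat : V → ℝ)
    (hg : ∃ M : ℝ, ∀ x ∈ E, |g x| ≤ M) (hghat : ∃ M : ℝ, ∀ x ∈ E, |ghat x| ≤ M)
    (hle : ∀ x ∈ E, g x ≤ ghat x) (S₀ : V) (hS₀ : S₀ ∈ E) :
    concEnv E ghat S₀ = concEnv E g S₀ ↔
      (∀ ε : ℝ, 0 < ε → ∃ ℓ : V →ᴬ[ℝ] ℝ,
        (∀ x ∈ E, g x ≤ ℓ x) ∧ ℓ S₀ ≤ concEnv E g S₀ + ε ∧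
        ∀ s ∈ E, ghat s ≤ ℓ s) :=
  stmt2_general E g ghat hghat hle S₀ hS₀
end

section
/- Let E be a compact convex set, g, ĝ : E → ℝ bounded with g ≤ ĝ, and S₀ ∈ E. Suppose V^cal = (conc ĝ)(S₀) and V^term = (conc g)(S₀). Then V^term = V^cal if and only if for every ε > 0 there exists a continuous affine ℓ_ε on E with ℓ_ε ≥ g, ℓ_ε(S₀) ≤ (conc g)(S₀) + ε, and ĝ ≤ ℓ_ε pointwise. -/
open Set

/-!
Every continuous affine majorant of `ĝ` on `E` is one of `g`, so `conc g ≤ conc ĝ`. Equality means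
that the infimum defining `conc g (S₀)` is already approached by majorants of `ĝ`, which is exactly
the affine-support condition; conversely, that condition gives `conc ĝ (S₀) ≤ conc g (S₀) + ε`
for every `ε > 0`.
-/

section AffineMajorants

variable {V : Type*} [AddCommGroup V] [Module ℝ V] [TopologicalSpace V]
  {E : Set V} {f f' : V → ℝ} {s : V}

def affineMajorantValues (E : Set V) (f : V → ℝ) (s : V) : Set ℝ :=
  {y : ℝ | ∃ ℓ : V →ᴬ[ℝ] ℝ, (∀ x ∈ E, f x ≤ ℓ x) ∧ y = ℓ s}

theorem affineMajorantValues_bddBelow (hs : s ∈ E) : BddBelow (affineMajorantValues E f s) := by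
  refine ⟨f s, ?_⟩
  rintro y ⟨ℓ, hℓ, rfl⟩
  exact hℓ s hs

theorem affineMajorantValues_nonempty (hf : ∃ M : ℝ, ∀ x ∈ E, f x ≤ M) :
    (affineMajorantValues E f s).Nonempty := by
  obtain ⟨M, hM⟩ := hf
  exact ⟨M, ContinuousAffineMap.const ℝ V M, hM, rfl⟩

theorem affineMajorantValues_antitone (h : ∀ x ∈ E, f x ≤ f' x) :
    affineMajorantValues E f' s ⊆ affineMajorantValues E f s := by
  rintro y ⟨ℓ, hℓ, rfl⟩
  exact ⟨ℓ, fun x hx => (h x hx).trans (hℓ x hx), rfl⟩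

theorem concEnv_le_apply (hs : s ∈ E) {ℓ : V →ᴬ[ℝ] ℝ} (hℓ : ∀ x ∈ E, f x ≤ ℓ x) :
    concEnv E f s ≤ ℓ s :=
  csInf_le (affineMajorantValues_bddBelow hs) ⟨ℓ, hℓ, rfl⟩

theorem exists_apply_lt_concEnv_add (hf : ∃ M : ℝ, ∀ x ∈ E, f x ≤ M) {ε : ℝ} (hε : 0 < ε) :
    ∃ ℓ : V →ᴬ[ℝ] ℝ, (∀ x ∈ E, f x ≤ ℓ x) ∧ ℓ s < concEnv E f s + ε := by
  obtain ⟨y, ⟨ℓ, hℓ, rfl⟩, hlt⟩ := Real.lt_sInf_add_pos (affineMajorantValues_nonempty hf) hε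
  exact ⟨ℓ, hℓ, hlt⟩

theorem concEnv_mono_s16 (hs : s ∈ E) (hf' : ∃ M : ℝ, ∀ x ∈ E, f' x ≤ M)
    (h : ∀ x ∈ E, f x ≤ f' x) : concEnv E f s ≤ concEnv E f' s :=
  csInf_le_csInf (affineMajorantValues_bddBelow hs) (affineMajorantValues_nonempty hf')
    (affineMajorantValues_antitone h)

end AffineMajorants

theorem stmt16_general {V : Type*} [AddCommGroup V] [Module ℝ V] [TopologicalSpace V]
    (E : Set V)
    (g ghat : V → ℝ)
    (hghat : ∃ M : ℝ, ∀ x ∈ E, |ghat x| ≤ M)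
    (hle : ∀ x ∈ E, g x ≤ ghat x) (S₀ : V) (hS₀ : S₀ ∈ E)
    (Vcal Vterm : ℝ)
    (hVcal : Vcal = concEnv E ghat S₀) (hVterm : Vterm = concEnv E g S₀) :
    Vterm = Vcal ↔
      (∀ ε : ℝ, 0 < ε → ∃ ℓ : V →ᴬ[ℝ] ℝ,
        (∀ x ∈ E, g x ≤ ℓ x) ∧ ℓ S₀ ≤ concEnv E g S₀ + ε ∧
        ∀ s ∈ E, ghat s ≤ ℓ s) := by
  subst hVcal hVterm
  have hghat_above : ∃ M : ℝ, ∀ x ∈ E, ghat x ≤ M := by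
    obtain ⟨M, hM⟩ := hghat
    exact ⟨M, fun x hx => (abs_le.1 (hM x hx)).2⟩
  constructor
  · intro heq ε hε
    obtain ⟨ℓ, hℓ, hlt⟩ := exists_apply_lt_concEnv_add (s := S₀) hghat_above hε
    refine ⟨ℓ, fun x hx => (hle x hx).trans (hℓ x hx), ?_, hℓ⟩
    rw [heq]
    exact hlt.le
  · intro hsupport
    refine le_antisymm (concEnv_mono_s16 hS₀ hghat_above hle) (le_of_forall_pos_le_add fun ε hε => ?_)
    obtain ⟨ℓ, -, hℓS₀, hℓ⟩ := hsupport ε hε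
    exact (concEnv_le_apply hS₀ hℓ).trans hℓS₀

theorem stmt16 {V : Type*} [AddCommGroup V] [Module ℝ V] [TopologicalSpace V]
    [IsTopologicalAddGroup V] [ContinuousSMul ℝ V] [LocallyConvexSpace ℝ V]
    (E : Set V) (hEc : IsCompact E) (hEconv : Convex ℝ E) (hEne : E.Nonempty)
    (g ghat : V → ℝ)
    (hg : ∃ M : ℝ, ∀ x ∈ E, |g x| ≤ M) (hghat : ∃ M : ℝ, ∀ x ∈ E, |ghat x| ≤ M)
    (hle : ∀ x ∈ E, g x ≤ ghat x) (S₀ : V) (hS₀ : S₀ ∈ E)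
    (Vcal Vterm : ℝ)
    (hVcal : Vcal = concEnv E ghat S₀) (hVterm : Vterm = concEnv E g S₀) :
    Vterm = Vcal ↔
      (∀ ε : ℝ, 0 < ε → ∃ ℓ : V →ᴬ[ℝ] ℝ,
        (∀ x ∈ E, g x ≤ ℓ x) ∧ ℓ S₀ ≤ concEnv E g S₀ + ε ∧
        ∀ s ∈ E, ghat s ≤ ℓ s) :=
  stmt16_general E g ghat hghat hle S₀ hS₀ Vcal Vterm hVcal hVterm
end
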